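/- arXiv:1402.3905 — 4 statements merged into one kernel-verified Lean document; each statement's English description precedes it below -/
import Mathlib

section
/- For g ≥ 3, consider the homomorphism of abelian groups ∂ : (⊕_{i=1}^{g−1} M(g)) ⊕ M(g) → M(g) defined by ∂((m_1,…,m_{g−1}), m_ρ) = Σ_{i=1}^{g−1}(T_i^{−1}(m_i) − m_i) + (R(m_ρ) − m_ρ). Writing t_{i,j} for the tuple whose i-th t-component is γ_j (all other components zero) and ρ_j for the tuple whose ρ-component is γ_j, the kernel of ∂ is generated, as an abelian group, by the following elements: (F1) t_{i,j} for i = 1,…,g−1 and j ∈ {1,…,g} with j ∉ {i, i+1}; (F2) t_{j,j} + t_{j,j+1} for j = 1,…,g−1; (F3) 2t_{j,j} + ρ_j + ρ_{j+1} for j = 1,…,g−1; (F4) 2t_{1,1} + 2t_{3,3} + ⋯ + 2t_{g−2,g−2} − ρ_g if g is odd, and 2t_{1,1} + 2t_{3,3} + ⋯ + 2t_{g−1,g−1} if g is even. -/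
/-- `M(g) = ℤ^g / ⟨2(e₁ + ⋯ + e_g)⟩`, i.e. `H_1(N_g; ℤ)`. -/
def MN (g : ℕ) : Type :=
  (Fin g → ℤ) ⧸ AddSubgroup.zmultiples (fun _ => (2 : ℤ) : Fin g → ℤ)

instance (g : ℕ) : AddCommGroup (MN g) := by unfold MN; infer_instance

/-- `γ_i`, the class of `e_i` in `M(g)` (`i` is a 0-based index). -/
def γ {g : ℕ} (i : Fin g) : MN g :=
  QuotientAddGroup.mk (Pi.single i 1)

/-- The inclusion `Fin (g-1) → Fin g`. -/
def idx {g : ℕ} (i : Fin (g-1)) : Fin g := ⟨i, by have := i.isLt; omega⟩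

/-- The successor map `Fin (g-1) → Fin g`, `i ↦ i+1`. -/
def idx1 {g : ℕ} (i : Fin (g-1)) : Fin g := ⟨(i : ℕ) + 1, by have := i.isLt; omega⟩

/-- The formulas defining the automorphisms `T_i` on the generators `γ_j` of `M(g)`. -/
def IsT {g : ℕ} (T : Fin (g-1) → AddAut (MN g)) : Prop :=
  ∀ i : Fin (g-1),
    T i (γ (idx i)) = - γ (idx1 i) ∧
    T i (γ (idx1 i)) = γ (idx i) + (2 : ℤ) • γ (idx1 i) ∧
    ∀ j : Fin g, j ≠ idx i → j ≠ idx1 i → T i (γ j) = γ j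

/-- The formula defining the automorphism `S` on the generators `γ_j` of `M(g)`
(with 1-based index `j`, `S(γ_j) = (-1)^j (2γ_1 + ⋯ + 2γ_{j-1} + γ_j)`). -/
def IsS {g : ℕ} (S : AddAut (MN g)) : Prop :=
  ∀ j : Fin g,
    S (γ j) = (-1 : ℤ) ^ ((j : ℕ) + 1) • ((2 : ℤ) • (∑ k ∈ Finset.Iio j, γ k) + γ j)

/-- `t_{i,j} = [t_i] ⊗ γ_j` in `(⊕_{i=1}^{g-1} M(g)) ⊕ M(g)`. -/
def tt {g : ℕ} (i : Fin (g-1)) (j : Fin g) : (Fin (g-1) → MN g) × MN g :=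
  (Pi.single i (γ j), 0)

/-- `ρ_j = [ρ] ⊗ γ_j` in `(⊕_{i=1}^{g-1} M(g)) ⊕ M(g)`. -/
def rr {g : ℕ} (j : Fin g) : (Fin (g-1) → MN g) × MN g :=
  (0, γ j)

/-- The generators (F1)-(F4) of the kernel (all indices in the names are 1-based, so e.g.
`t_{j,j}` is `tt j (idx j)`). -/
def kerGens (g : ℕ) (hg : 3 ≤ g) : Set ((Fin (g-1) → MN g) × MN g) :=
  -- (F1)  t_{i,j} for j ∉ {i, i+1}
  {x | ∃ (i : Fin (g-1)) (j : Fin g), (j : ℕ) ≠ i ∧ (j : ℕ) ≠ (i : ℕ) + 1 ∧ x = tt i j} ∪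
  -- (F2)  t_{j,j} + t_{j,j+1}
  {x | ∃ j : Fin (g-1), x = tt j (idx j) + tt j (idx1 j)} ∪
  -- (F3)  2t_{j,j} + ρ_j + ρ_{j+1}
  {x | ∃ j : Fin (g-1), x = (2 : ℤ) • tt j (idx j) + rr (idx j) + rr (idx1 j)} ∪
  -- (F4)  2t_{1,1} + 2t_{3,3} + ⋯ (+ possibly −ρ_g)
  {(∑ j : Fin (g-1), if Even (j : ℕ) then (2 : ℤ) • tt j (idx j) else 0) +
      (if Odd g then -(rr (⟨g-1, by omega⟩ : Fin g)) else 0)}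

/-! Modulo the relations (F1) and (F2), a chain is congruent to `Σ aᵢ t_{i,i} + Σ b_j ρ_j` with
integer coefficients, and `∂` of such a chain is the class of the vector `(a_j + a_{j-1} - 2 b_j)_j`
in `M(g)`. This class vanishes only if the vector is constant and even; reading it off from `j = 1`
upwards shows that every `aᵢ` is even, say `aᵢ = 2 qᵢ`. The chain is then `Σ qᵢ · (F3)ᵢ` minus a
multiple of `Σ_j ρ_j`, and `Σ_j ρ_j` is the sum of the (F3) elements with odd index minus (F4). -/

open Finset

namespace MN

def mk (g : ℕ) : (Fin g → ℤ) →+ MN g := QuotientAddGroup.mk' _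

variable {g : ℕ}

lemma mk_surjective : Function.Surjective (mk g) := QuotientAddGroup.mk'_surjective _

lemma mk_single (j : Fin g) (n : ℤ) : mk g (Pi.single j n) = n • γ j := by
  have : (Pi.single j n : Fin g → ℤ) = n • Pi.single j 1 := by
    rw [← Pi.single_smul, smul_eq_mul, mul_one]
  rw [this, map_zsmul]
  rfl

lemma mk_eq_sum (c : Fin g → ℤ) : mk g c = ∑ j, c j • γ j := by
  conv_lhs => rw [← univ_sum_single c]
  simp only [map_sum, mk_single]

lemma mk_eq_zero_iff (c : Fin g → ℤ) : mk g c = 0 ↔ ∃ k : ℤ, ∀ j, c j = 2 * k := by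
  change (QuotientAddGroup.mk c : (Fin g → ℤ) ⧸ _) = 0 ↔ _
  rw [QuotientAddGroup.eq_zero_iff, AddSubgroup.mem_zmultiples_iff]
  simp only [funext_iff, Pi.smul_apply, smul_eq_mul, mul_comm, eq_comm]

end MN

def natExt {n : ℕ} (a : Fin n → ℤ) (p : ℕ) : ℤ := if h : p < n then a ⟨p, h⟩ else 0

lemma sum_ite_val_eq_natExt {n : ℕ} (a : Fin n → ℤ) (p : ℕ) :
    ∑ i : Fin n, (if (i : ℕ) = p then a i else 0) = natExt a p := by
  have ha : ∀ i : Fin n, a i = natExt a i := fun i => by simp [natExt]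
  simp_rw [ha, Fin.sum_univ_eq_sum_range (fun i => if i = p then natExt a i else 0),
    sum_ite_eq', mem_range, natExt]
  split_ifs <;> simp_all

lemma idx_ne_idx1 {g : ℕ} (i : Fin (g-1)) : idx i ≠ idx1 i := by
  simp [idx, idx1, Fin.ext_iff]

def pairSum (g : ℕ) : (Fin (g-1) → ℤ) →+ (Fin g → ℤ) where
  toFun a := ∑ i, a i • (Pi.single (idx i) 1 + Pi.single (idx1 i) 1)
  map_zero' := by simp
  map_add' a b := by simp only [Pi.add_apply, add_smul, sum_add_distrib]

lemma pairSum_apply {g : ℕ} (a : Fin (g-1) → ℤ) (j : Fin g) :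
    pairSum g a j = natExt a j + ∑ i : Fin (g-1), if (i : ℕ) + 1 = j then a i else 0 := by
  simp [pairSum, Finset.sum_apply, Pi.single_apply, Fin.ext_iff, idx, idx1,
    sum_add_distrib, ← sum_ite_val_eq_natExt, eq_comm]

lemma pairSum_apply_zero {g : ℕ} (a : Fin (g-1) → ℤ) (h : 0 < g) :
    pairSum g a ⟨0, h⟩ = natExt a 0 := by
  simp [pairSum_apply]

lemma pairSum_apply_succ {g : ℕ} (a : Fin (g-1) → ℤ) (p : ℕ) (h : p + 1 < g) :
    pairSum g a ⟨p + 1, h⟩ = natExt a (p + 1) + natExt a p := by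
  simp [pairSum_apply, ← sum_ite_val_eq_natExt]

lemma even_of_even_pairSum {g : ℕ} (a : Fin (g-1) → ℤ) (h : ∀ j, Even (pairSum g a j))
    (i : Fin (g-1)) :
    Even (a i) := by
  suffices ∀ p, Even (natExt a p) by simpa [natExt] using this i
  intro p
  induction p with
  | zero =>
    by_cases hp : 0 < g
    · simpa [pairSum_apply_zero a hp] using h ⟨0, hp⟩
    · simp [natExt, show ¬ 0 < g - 1 by omega]
  | succ p ih =>
    by_cases hp : p + 1 < g
    · have := h ⟨p + 1, hp⟩
      rw [pairSum_apply_succ a p hp] at this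
      exact (Int.even_add.mp this).mpr ih
    · simp [natExt, show ¬ p + 1 < g - 1 by omega]

def evenIndicator (n : ℕ) (i : Fin n) : ℤ := if Even (i : ℕ) then 1 else 0

lemma pairSum_evenIndicator {g : ℕ} (hg : 0 < g) :
    pairSum g (evenIndicator (g-1)) +
      (if Odd g then Pi.single ⟨g - 1, by omega⟩ 1 else 0) = 1 := by
  funext ⟨j, hj⟩
  cases j with
  | zero =>
    simp only [Pi.add_apply, pairSum_apply_zero, natExt, evenIndicator]
    split_ifs <;> simp_all [Pi.single_apply, Fin.ext_iff, Nat.odd_iff] <;> omega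
  | succ p =>
    simp only [Pi.add_apply, pairSum_apply_succ, natExt, evenIndicator]
    split_ifs <;> simp_all [Pi.single_apply, Fin.ext_iff, Nat.even_iff, Nat.odd_iff] <;> omega

abbrev Chains (g : ℕ) : Type := (Fin (g-1) → MN g) × MN g

lemma prod_pi_eq_sum_single_add {ι A B : Type*} [Fintype ι] [DecidableEq ι] [AddCommMonoid A]
    [AddCommMonoid B] (m : (ι → A) × B) : m = ∑ i, (Pi.single i (m.1 i), 0) + (0, m.2) := by
  ext
  · simp [Prod.fst_sum, univ_sum_single]
  · simp [Prod.snd_sum]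

def ofCoeffs (g : ℕ) : (Fin (g-1) → ℤ) × (Fin g → ℤ) →+ Chains g where
  toFun ab := ∑ i, ab.1 i • tt i (idx i) + (0, MN.mk g ab.2)
  map_zero' := by simp
  map_add' x y := by
    simp only [Prod.fst_add, Pi.add_apply, add_smul, sum_add_distrib, Prod.snd_add, map_add]
    rw [← add_zero (0 : Fin (g-1) → MN g), ← Prod.mk_add_mk]
    abel

lemma ofCoeffs_two_smul_pairSum {g : ℕ} (q : Fin (g-1) → ℤ) :
    ofCoeffs g ((2 : ℤ) • q, pairSum g q) =
      ∑ i, q i • ((2 : ℤ) • tt i (idx i) + rr (idx i) + rr (idx1 i)) := by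
  simp only [ofCoeffs, pairSum, AddMonoidHom.coe_mk, ZeroHom.coe_mk, map_sum, map_zsmul, map_add,
    MN.mk_single, one_smul]
  rw [show ∀ y : MN g, ((0 : Fin (g-1) → MN g), y) = AddMonoidHom.inr _ _ y from fun _ => rfl,
    map_sum, ← sum_add_distrib]
  refine sum_congr rfl fun i _ => ?_
  rw [Pi.smul_apply, smul_eq_mul, mul_comm, mul_smul, map_zsmul, map_add]
  simp only [smul_add, add_assoc]
  rfl

namespace IsT

variable {g : ℕ} {T : Fin (g-1) → AddAut (MN g)} (hT : IsT T) (i : Fin (g-1))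
include hT

lemma neg_apply_idx : (-(T i)) (γ (idx i)) = (2 : ℤ) • γ (idx i) + γ (idx1 i) := by
  apply (T i).injective
  rw [AddAut.apply_neg_self, map_add, map_zsmul, (hT i).1, (hT i).2.1]
  abel

lemma neg_apply_idx1 : (-(T i)) (γ (idx1 i)) = -γ (idx i) := by
  apply (T i).injective
  rw [AddAut.apply_neg_self, map_neg, (hT i).1, neg_neg]

lemma neg_apply_of_ne {j : Fin g} (h : j ≠ idx i) (h1 : j ≠ idx1 i) : (-(T i)) (γ j) = γ j := by
  apply (T i).injective
  rw [AddAut.apply_neg_self, (hT i).2.2 j h h1]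

end IsT

section Boundary

variable {g : ℕ}

def boundary (T : Fin (g-1) → AddAut (MN g)) (R : AddAut (MN g)) : Chains g →+ MN g where
  toFun m := (∑ i, ((-(T i)) (m.1 i) - m.1 i)) + (R m.2 - m.2)
  map_zero' := by simp
  map_add' x y := by
    simp only [Prod.fst_add, Prod.snd_add, Pi.add_apply, map_add, add_sub_add_comm,
      sum_add_distrib]
    abel

variable {T : Fin (g-1) → AddAut (MN g)} {R : AddAut (MN g)}

lemma boundary_tt (i : Fin (g-1)) (j : Fin g) : boundary T R (tt i j) = (-(T i)) (γ j) - γ j := by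
  simp only [boundary, tt, AddMonoidHom.coe_mk, ZeroHom.coe_mk, map_zero, sub_self, add_zero]
  rw [sum_congr rfl fun k _ => Pi.apply_single (fun k y => (-(T k)) y - y) (by simp) i (γ j) k,
    sum_pi_single', if_pos (mem_univ i)]

lemma boundary_zero_mk (hR : ∀ x, R x = -x) (x : MN g) :
    boundary T R (0, x) = -((2 : ℤ) • x) := by
  simp only [boundary, AddMonoidHom.coe_mk, ZeroHom.coe_mk, Pi.zero_apply, map_zero, sub_zero,
    sum_const_zero, hR, zero_add]
  abel

lemma boundary_rr (hR : ∀ x, R x = -x) (j : Fin g) : boundary T R (rr j) = -((2 : ℤ) • γ j) :=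
  boundary_zero_mk hR (γ j)

lemma boundary_tt_idx (hT : IsT T) (i : Fin (g-1)) :
    boundary T R (tt i (idx i)) = γ (idx i) + γ (idx1 i) := by
  rw [boundary_tt, hT.neg_apply_idx, two_zsmul]
  abel

lemma boundary_ofCoeffs (hT : IsT T) (hR : ∀ x, R x = -x) (ab : (Fin (g-1) → ℤ) × (Fin g → ℤ)) :
    boundary T R (ofCoeffs g ab) = MN.mk g (pairSum g ab.1 - (2 : ℤ) • ab.2) := by
  simp only [ofCoeffs, pairSum, AddMonoidHom.coe_mk, ZeroHom.coe_mk, map_add, map_sum, map_zsmul,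
    map_neg, boundary_tt_idx hT, boundary_zero_mk hR, MN.mk_single, one_smul, sub_eq_add_neg]

end Boundary

section Kernel

variable {g : ℕ} (hg : 3 ≤ g) {T : Fin (g-1) → AddAut (MN g)} {R : AddAut (MN g)}

local notation "K" => AddSubgroup.closure (kerGens g hg)

lemma tt_mem_closure_kerGens {i : Fin (g-1)} {j : Fin g} (h : j ≠ idx i) (h1 : j ≠ idx1 i) :
    tt i j ∈ K :=
  AddSubgroup.subset_closure (show tt i j ∈ kerGens g hg from
    Or.inl <| Or.inl <| Or.inl ⟨i, j, fun e => h (Fin.ext e), fun e => h1 (Fin.ext e), rfl⟩)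

lemma tt_add_tt_mem_closure_kerGens (i : Fin (g-1)) : tt i (idx i) + tt i (idx1 i) ∈ K :=
  AddSubgroup.subset_closure (show _ ∈ kerGens g hg from Or.inl <| Or.inl <| Or.inr ⟨i, rfl⟩)

lemma ofCoeffs_two_smul_pairSum_mem (q : Fin (g-1) → ℤ) :
    ofCoeffs g ((2 : ℤ) • q, pairSum g q) ∈ K := by
  rw [ofCoeffs_two_smul_pairSum]
  exact AddSubgroup.sum_mem _ fun i _ =>
    AddSubgroup.zsmul_mem _
      (AddSubgroup.subset_closure (show _ ∈ kerGens g hg from Or.inl <| Or.inr ⟨i, rfl⟩)) _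

lemma kerGens_F4_eq :
    (∑ j : Fin (g-1), if Even (j : ℕ) then (2 : ℤ) • tt j (idx j) else 0) +
      (if Odd g then -(rr (⟨g-1, by omega⟩ : Fin g)) else 0) =
    ofCoeffs g ((2 : ℤ) • evenIndicator (g-1),
      -(if Odd g then Pi.single ⟨g - 1, by omega⟩ 1 else 0)) := by
  simp only [ofCoeffs, AddMonoidHom.coe_mk, ZeroHom.coe_mk, evenIndicator, Pi.smul_apply,
    smul_eq_mul, mul_ite, mul_one, mul_zero, ite_smul, zero_smul, map_neg]
  split_ifs <;> simp [rr, MN.mk_single]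

lemma ofCoeffs_zero_one_mem : ofCoeffs g (0, 1) ∈ K := by
  set χ := evenIndicator (g-1)
  set s : Fin g → ℤ := if Odd g then Pi.single ⟨g - 1, by omega⟩ 1 else 0
  have hF4 : ofCoeffs g ((2 : ℤ) • χ, -s) ∈ K :=
    kerGens_F4_eq hg ▸ AddSubgroup.subset_closure (Or.inr rfl)
  have h : ((0 : Fin (g-1) → ℤ), (1 : Fin g → ℤ)) =
      ((2 : ℤ) • χ, pairSum g χ) - ((2 : ℤ) • χ, -s) := by
    rw [Prod.mk_sub_mk, sub_self, sub_neg_eq_add, pairSum_evenIndicator (by omega)]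
  rw [h, map_sub]
  exact sub_mem (ofCoeffs_two_smul_pairSum_mem hg χ) hF4

lemma closure_kerGens_le_ker_boundary (hT : IsT T) (hR : ∀ x, R x = -x) :
    K ≤ (boundary T R).ker := by
  rw [AddSubgroup.closure_le]
  rintro x (((⟨i, j, h, h1, rfl⟩ | ⟨j, rfl⟩) | ⟨j, rfl⟩) | rfl) <;>
    simp only [SetLike.mem_coe, AddMonoidHom.mem_ker]
  · rw [boundary_tt, hT.neg_apply_of_ne i (fun e => h (by rw [e]; rfl))
      (fun e => h1 (by rw [e]; rfl)), sub_self]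
  · rw [map_add, boundary_tt_idx hT, boundary_tt, hT.neg_apply_idx1]
    abel
  · rw [map_add, map_add, map_zsmul, boundary_tt_idx hT, boundary_rr hR, boundary_rr hR]
    abel
  · rw [kerGens_F4_eq hg, boundary_ofCoeffs hT hR, MN.mk_eq_zero_iff]
    refine ⟨1, fun j => ?_⟩
    have := congrFun (pairSum_evenIndicator (g := g) (by omega)) j
    simp only [Pi.add_apply, Pi.one_apply] at this
    simp only [map_zsmul, Pi.sub_apply, Pi.smul_apply, Pi.neg_apply, smul_eq_mul]
    linarith

lemma mk_tt_eq (i : Fin (g-1)) (j : Fin g) :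
    (tt i j : Chains g ⧸ K) =
      (Pi.single (idx i) 1 - Pi.single (idx1 i) 1 : Fin g → ℤ) j •
        (tt i (idx i) : Chains g ⧸ K) := by
  by_cases h : j = idx i
  · simp [h, (idx_ne_idx1 i).symm]
  by_cases h1 : j = idx1 i
  · subst h1
    have := (QuotientAddGroup.eq_zero_iff _).mpr (tt_add_tt_mem_closure_kerGens hg i)
    rw [QuotientAddGroup.mk_add] at this
    simp [idx_ne_idx1 i, eq_neg_of_add_eq_zero_right this]
  · simp [h, h1, (QuotientAddGroup.eq_zero_iff _).mpr (tt_mem_closure_kerGens hg h h1)]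

lemma mk_single_mk_eq (i : Fin (g-1)) (c : Fin g → ℤ) :
    (((Pi.single i (MN.mk g c), 0) : Chains g) : Chains g ⧸ K) =
      (c (idx i) - c (idx1 i)) • (tt i (idx i) : Chains g ⧸ K) := by
  have hsum : ((Pi.single i (MN.mk g c), 0) : Chains g) = ∑ j, c j • tt i j := by
    change AddMonoidHom.inl _ _
      (AddMonoidHom.single (fun _ : Fin (g-1) => MN g) i (MN.mk g c)) = _
    simp only [MN.mk_eq_sum, map_sum, map_zsmul]
    rfl
  rw [hsum, QuotientAddGroup.mk_sum,
    sum_congr rfl fun j _ => by rw [QuotientAddGroup.mk_zsmul, mk_tt_eq hg, smul_smul],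
    ← sum_smul, ← dotProduct, dotProduct_sub, dotProduct_single, dotProduct_single, mul_one,
    mul_one]

lemma exists_sub_ofCoeffs_mem (m : Chains g) : ∃ ab, m - ofCoeffs g ab ∈ K := by
  choose c hc using fun i => MN.mk_surjective (m.1 i)
  obtain ⟨b, hb⟩ := MN.mk_surjective m.2
  refine ⟨(fun i => c i (idx i) - c i (idx1 i), b), ?_⟩
  rw [← QuotientAddGroup.eq_zero_iff, QuotientAddGroup.mk_sub, sub_eq_zero,
    prod_pi_eq_sum_single_add m]
  simp only [ofCoeffs, AddMonoidHom.coe_mk, ZeroHom.coe_mk, ← hc, ← hb, QuotientAddGroup.mk_add,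
    QuotientAddGroup.mk_sum, QuotientAddGroup.mk_zsmul, mk_single_mk_eq hg]

lemma ofCoeffs_mem_of_mk_eq_zero (ab : (Fin (g-1) → ℤ) × (Fin g → ℤ))
    (h : MN.mk g (pairSum g ab.1 - (2 : ℤ) • ab.2) = 0) : ofCoeffs g ab ∈ K := by
  obtain ⟨a, b⟩ := ab
  obtain ⟨k, hk⟩ := (MN.mk_eq_zero_iff _).mp h
  have ha : ∀ i, Even (a i) := even_of_even_pairSum a fun j =>
    ⟨k + b j, by
      have := hk j
      simp only [Pi.sub_apply, Pi.smul_apply, smul_eq_mul] at this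
      linarith⟩
  choose q hq using ha
  have hab : (a, b) = ((2 : ℤ) • q, pairSum g q) - k • (0, 1) := by
    have h2q : a = (2 : ℤ) • q := funext fun i => by simp [hq i, two_mul]
    subst h2q
    refine Prod.ext (by simp) (funext fun j => ?_)
    have := hk j
    simp only [map_zsmul, Pi.sub_apply, Pi.smul_apply, smul_eq_mul] at this
    simp only [Prod.snd_sub, Prod.smul_snd, Pi.sub_apply, Pi.smul_apply, Pi.one_apply, smul_eq_mul]
    linarith
  rw [hab, map_sub, map_zsmul]
  exact sub_mem (ofCoeffs_two_smul_pairSum_mem hg q) (zsmul_mem (ofCoeffs_zero_one_mem hg) k)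

lemma ker_boundary_le_closure_kerGens (hT : IsT T) (hR : ∀ x, R x = -x) :
    (boundary T R).ker ≤ K := by
  intro m hm
  obtain ⟨ab, hab⟩ := exists_sub_ofCoeffs_mem hg m
  have hK := closure_kerGens_le_ker_boundary hg hT hR hab
  rw [AddMonoidHom.mem_ker, map_sub, AddMonoidHom.mem_ker.mp hm, zero_sub, neg_eq_zero,
    boundary_ofCoeffs hT hR] at hK
  simpa using add_mem hab (ofCoeffs_mem_of_mk_eq_zero hg ab hK)

end Kernel

/-- The kernel of `∂((m_1,…,m_{g-1}), m_ρ) = Σ_i (T_i⁻¹(m_i) − m_i) + (R(m_ρ) − m_ρ)` is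
generated, as an abelian group, by the elements (F1)-(F4). -/
theorem stmt10 (g : ℕ) (hg : 3 ≤ g) (T : Fin (g-1) → AddAut (MN g)) (hT : IsT T)
    (R : AddAut (MN g)) (hR : ∀ x, R x = -x) :
    (∃ D : ((Fin (g-1) → MN g) × MN g) →+ MN g,
      ∀ m, D m = (∑ i : Fin (g-1), ((-(T i)) (m.1 i) - m.1 i)) + (R m.2 - m.2)) ∧
    ∀ D : ((Fin (g-1) → MN g) × MN g) →+ MN g,
      (∀ m, D m = (∑ i : Fin (g-1), ((-(T i)) (m.1 i) - m.1 i)) + (R m.2 - m.2)) →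
      D.ker = AddSubgroup.closure (kerGens g hg) := by
  refine ⟨⟨boundary T R, fun _ => rfl⟩, fun D hD => ?_⟩
  obtain rfl : D = boundary T R := AddMonoidHom.ext hD
  exact le_antisymm (ker_boundary_le_closure_kerGens hg hT hR)
    (closure_kerGens_le_ker_boundary hg hT hR)
end

section
/- For g ≥ 2, let G_H(g) be the presented group with generators t_1,…,t_{2g+1}, ρ and defining relations: t_k t_j = t_j t_k for |k−j| > 1; t_j t_{j+1} t_j = t_{j+1} t_j t_{j+1} for j = 1,…,2g; (t_1 t_2 ⋯ t_{2g+1})^{2g+2} = 1; ρ = t_1 t_2 ⋯ t_{2g+1} t_{2g+1} ⋯ t_2 t_1; ρ² = 1; and ρ t_1 ρ = t_1. Then the abelianization of G_H(g) is cyclic, generated by the image of t_1, and is isomorphic to Z/(4g+2) if g is even and to Z/(8g+4) if g is odd. -/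
open FreeGroup in
/-- The Birman–Hilden relations for `M^h(S_g)`. The generator `some i` is `t_{i+1}`
(`i : Fin (2g+1)`), `none` is `ρ`. -/
def relsH (g : ℕ) : Set (FreeGroup (Option (Fin (2*g+1)))) :=
  -- t_k t_j = t_j t_k for |k-j| > 1
  {r | ∃ j k : Fin (2*g+1), ((j : ℕ) + 1 < k ∨ (k : ℕ) + 1 < j) ∧
        r = of (some k) * of (some j) * (of (some j) * of (some k))⁻¹} ∪
  -- braid relations
  {r | ∃ j k : Fin (2*g+1), (j : ℕ) + 1 = k ∧
        r = of (some j) * of (some k) * of (some j) *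
            (of (some k) * of (some j) * of (some k))⁻¹} ∪
  -- (t_1 ⋯ t_{2g+1})^{2g+2} = 1
  {(List.ofFn (fun i : Fin (2*g+1) => of (some i : Option (Fin (2*g+1))))).prod ^ (2*g+2)} ∪
  -- ρ = t_1 ⋯ t_{2g+1} t_{2g+1} ⋯ t_1
  {(List.ofFn (fun i : Fin (2*g+1) => of (some i : Option (Fin (2*g+1))))).prod *
      ((List.ofFn (fun i : Fin (2*g+1) => of (some i : Option (Fin (2*g+1))))).reverse).prod *
      (of (none : Option (Fin (2*g+1))))⁻¹} ∪
  -- ρ² = 1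
  {of (none : Option (Fin (2*g+1))) ^ 2} ∪
  -- ρ t_1 ρ = t_1
  {of (none : Option (Fin (2*g+1))) * of (some 0) * of none * (of (some 0))⁻¹}

/-- `G_H(g)`, the Birman–Hilden presentation of the hyperelliptic mapping class group
`M^h(S_g)`. -/
def GH (g : ℕ) : Type := PresentedGroup (relsH g)

instance (g : ℕ) : Group (GH g) := by unfold GH; infer_instance

/-- The generator `t_{i+1}` of `G_H(g)`. -/
def GH.t {g : ℕ} (i : Fin (2*g+1)) : GH g := PresentedGroup.of (rels := relsH g) (some i)

/-!
In the abelianization the braid relations identify all `t_i` with one element `τ`, and then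
`ρ = τ ^ (4g+2)`. What remains of the relations is `τ ^ ((2g+1)(2g+2)) = 1` and
`ρ² = τ ^ (8g+4) = 1` (the relation `ρ t_1 ρ = t_1` follows from the latter), so `H_1` is cyclic of
order `gcd((2g+1)(2g+2), 8g+4) = (2g+1) · gcd(2g+2, 4)`.
-/

open Subgroup

theorem ZMod.orderOf_ofAdd_one (n : ℕ) : orderOf (Multiplicative.ofAdd (1 : ZMod n)) = n := by
  rw [orderOf_ofAdd_eq_addOrderOf, ZMod.addOrderOf_one]

theorem ZMod.mem_zpowers_ofAdd_one {n : ℕ} (x : Multiplicative (ZMod n)) :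
    x ∈ zpowers (Multiplicative.ofAdd 1) := by
  obtain ⟨k, rfl⟩ := ZMod.intCast_surjective x.toAdd
  exact ⟨k, by simp [← ofAdd_zsmul]; rfl⟩

theorem nonempty_mulEquiv_zmod_of_zpowers_eq_top {G : Type*} [Group G] {a : G}
    (ha : zpowers a = ⊤) {n : ℕ} (hn : a ^ n = 1) (φ : G →* Multiplicative (ZMod n))
    (hφ : φ a = Multiplicative.ofAdd 1) : Nonempty (G ≃* Multiplicative (ZMod n)) := by
  have horder : orderOf a = n := Nat.dvd_antisymm (orderOf_dvd_of_pow_eq_one hn)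
    (ZMod.orderOf_ofAdd_one n ▸ hφ ▸ orderOf_map_dvd φ a)
  exact ⟨mulEquivOfOrderOfEq (fun x => ha ▸ mem_top x) ZMod.mem_zpowers_ofAdd_one
    (horder.trans (ZMod.orderOf_ofAdd_one n).symm)⟩

theorem eq_of_mul_mul_eq_mul_mul {M : Type*} [CommMonoid M] [IsLeftCancelMul M] {x y : M}
    (h : x * y * x = y * x * y) : x = y := by
  rw [mul_comm x y] at h
  exact mul_left_cancel h

theorem MonoidHom.map_list_prod_ofFn_of_forall_eq {M N : Type*} [Monoid M] [Monoid N]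
    (F : M →* N) {n : ℕ} {x : Fin n → M} {c : N} (h : ∀ i, F (x i) = c) :
    F (List.ofFn x).prod = c ^ n := by
  rw [map_list_prod, List.map_ofFn, show F ∘ x = fun _ => c from funext h, List.ofFn_const,
    List.prod_replicate]

theorem MonoidHom.map_list_prod_reverse_ofFn_of_forall_eq {M N : Type*} [Monoid M]
    [CommMonoid N] (F : M →* N) {n : ℕ} {x : Fin n → M} {c : N} (h : ∀ i, F (x i) = c) :
    F (List.ofFn x).reverse.prod = c ^ n := by
  rw [map_list_prod, List.map_reverse, List.prod_reverse, ← map_list_prod,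
    F.map_list_prod_ofFn_of_forall_eq h]

namespace GH

variable {g : ℕ}

def τ (g : ℕ) : Abelianization (GH g) := Abelianization.of (GH.t 0)

def freeToAbelianization (g : ℕ) : FreeGroup (Option (Fin (2*g+1))) →* Abelianization (GH g) :=
  (Abelianization.of (G := GH g)).comp (PresentedGroup.mk (relsH g))

theorem freeToAbelianization_surjective : Function.Surjective (freeToAbelianization g) :=
  (QuotientGroup.mk'_surjective _).comp (PresentedGroup.mk_surjective _)

theorem freeToAbelianization_eq_one_of_mem {r : FreeGroup (Option (Fin (2*g+1)))}
    (hr : r ∈ relsH g) : freeToAbelianization g r = 1 := by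
  show Abelianization.of (PresentedGroup.mk _ r) = 1
  rw [PresentedGroup.one_of_mem hr, map_one]

theorem freeToAbelianization_eq_of_mul_inv_mem {x y : FreeGroup (Option (Fin (2*g+1)))}
    (h : x * y⁻¹ ∈ relsH g) : freeToAbelianization g x = freeToAbelianization g y :=
  eq_of_mul_inv_eq_one <| by rw [← map_inv, ← map_mul]; exact freeToAbelianization_eq_one_of_mem h

theorem freeToAbelianization_t (i : Fin (2*g+1)) :
    freeToAbelianization g (FreeGroup.of (some i)) = τ g := by
  obtain ⟨k, hk⟩ := i
  induction k with
  | zero => rfl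
  | succ k ih =>
    rw [← ih (by omega)]
    have hbraid := freeToAbelianization_eq_of_mul_inv_mem (g := g)
      (Or.inl (Or.inl (Or.inl (Or.inl (Or.inr ⟨⟨k, by omega⟩, ⟨k+1, hk⟩, rfl, rfl⟩)))))
    simp only [map_mul] at hbraid
    exact (eq_of_mul_mul_eq_mul_mul hbraid).symm

theorem freeToAbelianization_ρ : freeToAbelianization g (FreeGroup.of none) = τ g ^ (4*g+2) := by
  have h := freeToAbelianization_eq_of_mul_inv_mem (g := g) (Or.inl (Or.inl (Or.inr rfl)))
  rw [map_mul, (freeToAbelianization g).map_list_prod_ofFn_of_forall_eq freeToAbelianization_t,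
    (freeToAbelianization g).map_list_prod_reverse_ofFn_of_forall_eq freeToAbelianization_t,
    ← pow_add] at h
  rw [← h]
  ring_nf

theorem τ_pow_mul_eq_one : τ g ^ ((2*g+1)*(2*g+2)) = 1 := by
  have h := freeToAbelianization_eq_one_of_mem (g := g) (Or.inl (Or.inl (Or.inl (Or.inr rfl))))
  rwa [map_pow, (freeToAbelianization g).map_list_prod_ofFn_of_forall_eq freeToAbelianization_t,
    ← pow_mul] at h

theorem τ_pow_eq_one : τ g ^ (8*g+4) = 1 := by
  have h := freeToAbelianization_eq_one_of_mem (g := g) (Or.inl (Or.inr rfl))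
  rwa [map_pow, freeToAbelianization_ρ, ← pow_mul,
    show (4*g+2)*2 = 8*g+4 by ring] at h

theorem zpowers_τ : zpowers (τ g) = ⊤ := by
  rw [eq_top_iff, ← MonoidHom.range_eq_top.2 freeToAbelianization_surjective,
    MonoidHom.range_eq_map, ← FreeGroup.closure_range_of, MonoidHom.map_closure, closure_le]
  rintro _ ⟨_, ⟨x | i, rfl⟩, rfl⟩
  · rw [freeToAbelianization_ρ]
    exact npow_mem_zpowers _ _
  · rw [freeToAbelianization_t]
    exact mem_zpowers _

theorem map_eq_one_of_mem_relsH {M : Type*} [CommGroup M]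
    (F : FreeGroup (Option (Fin (2*g+1))) →* M) {c : M} (ht : ∀ i, F (FreeGroup.of (some i)) = c)
    (hρ : F (FreeGroup.of none) = c ^ (4*g+2)) (hc : c ^ ((2*g+1)*(2*g+2)) = 1)
    (hc' : c ^ (8*g+4) = 1) : ∀ r ∈ relsH g, F r = 1 := by
  rintro r (((((⟨j, k, -, rfl⟩ | ⟨j, k, -, rfl⟩) | rfl) | rfl) | rfl) | rfl)
  · simp [ht]
  · simp [ht]
  · rw [map_pow, F.map_list_prod_ofFn_of_forall_eq ht, ← pow_mul, hc]
  · rw [map_mul, map_mul, F.map_list_prod_ofFn_of_forall_eq ht,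
      F.map_list_prod_reverse_ofFn_of_forall_eq ht, map_inv, hρ, ← pow_add, mul_inv_eq_one]
    ring_nf
  · rw [map_pow, hρ, ← pow_mul, ← hc']
    ring_nf
  · rw [map_mul, map_mul, map_mul, map_inv, hρ, ht, mul_inv_eq_one, mul_right_comm,
      ← pow_add, show 4*g+2 + (4*g+2) = 8*g+4 by ring, hc', one_mul]

def abelianizationOrder (g : ℕ) : ℕ := Nat.gcd ((2*g+1)*(2*g+2)) (8*g+4)

theorem nonempty_abelianization_mulEquiv_zmod :
    Nonempty (Abelianization (GH g) ≃* Multiplicative (ZMod (abelianizationOrder g))) := by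
  set c := Multiplicative.ofAdd (1 : ZMod (abelianizationOrder g))
  have hc : ∀ k, c ^ k = 1 ↔ abelianizationOrder g ∣ k := by
    intro k
    rw [← orderOf_dvd_iff_pow_eq_one, ZMod.orderOf_ofAdd_one]
  have hrels : ∀ r ∈ relsH g, FreeGroup.lift (fun x => x.elim (c ^ (4*g+2)) fun _ => c) r = 1 :=
    map_eq_one_of_mem_relsH _ (fun _ => FreeGroup.lift_apply_of) FreeGroup.lift_apply_of
      ((hc _).2 (Nat.gcd_dvd_left _ _)) ((hc _).2 (Nat.gcd_dvd_right _ _))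
  exact nonempty_mulEquiv_zmod_of_zpowers_eq_top zpowers_τ
    (pow_gcd_eq_one.2 ⟨τ_pow_mul_eq_one, τ_pow_eq_one⟩)
    (Abelianization.lift (PresentedGroup.toGroup hrels)) (PresentedGroup.toGroup.of hrels)

theorem abelianizationOrder_of_even (hg : Even g) : abelianizationOrder g = 4*g+2 := by
  obtain ⟨c, rfl⟩ := hg
  rw [abelianizationOrder, show 8*(c+c)+4 = (2*(c+c)+1)*4 by ring, Nat.gcd_mul_left,
    Nat.gcd_comm, Nat.gcd_rec, show (2*(c+c)+2) % 4 = 2 by omega]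
  norm_num
  ring

theorem abelianizationOrder_of_odd (hg : Odd g) : abelianizationOrder g = 8*g+4 := by
  obtain ⟨c, rfl⟩ := hg
  rw [abelianizationOrder, show 8*(2*c+1)+4 = (2*(2*c+1)+1)*4 by ring, Nat.gcd_mul_left,
    Nat.gcd_comm, Nat.gcd_rec, show (2*(2*c+1)+2) % 4 = 0 by omega]
  norm_num

end GH

theorem stmt14_general (g : ℕ) :
    Subgroup.closure {Abelianization.of (GH.t (0 : Fin (2*g+1)))} = ⊤ ∧
    (Even g → Nonempty (Abelianization (GH g) ≃* Multiplicative (ZMod (4*g+2)))) ∧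
    (Odd g → Nonempty (Abelianization (GH g) ≃* Multiplicative (ZMod (8*g+4)))) := by
  refine ⟨?_, fun he => ?_, fun ho => ?_⟩
  · rw [← zpowers_eq_closure]
    exact GH.zpowers_τ
  · rw [← GH.abelianizationOrder_of_even he]
    exact GH.nonempty_abelianization_mulEquiv_zmod
  · rw [← GH.abelianizationOrder_of_odd ho]
    exact GH.nonempty_abelianization_mulEquiv_zmod

/-- `H_1(M^h(S_g))` is cyclic, generated by the image of `t_1`, and is `ℤ/(4g+2)` for `g`
even and `ℤ/(8g+4)` for `g` odd. -/
theorem stmt14 (g : ℕ) (hg : 2 ≤ g) :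
    Subgroup.closure {Abelianization.of (GH.t (0 : Fin (2*g+1)))} = ⊤ ∧
    (Even g → Nonempty (Abelianization (GH g) ≃* Multiplicative (ZMod (4*g+2)))) ∧
    (Odd g → Nonempty (Abelianization (GH g) ≃* Multiplicative (ZMod (8*g+4)))) :=
  stmt14_general g
end

section
/- For g ≥ 3, the element ρ of the presented group G_E(g) is not equal to the identity; hence ρ has order exactly 2 in G_E(g). In particular, for g odd the element (t_1⋯t_{g−1})^g of G_E(g) is a nontrivial central element of order 2. -/
open FreeGroup in
/-- Relations (E1)-(E5). The generator `some i` is `t_{i+1}` and `none` is `ρ`. -/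
def relsE (g : ℕ) : Set (FreeGroup (Option (Fin (g-1)))) :=
  -- (E1)
  {r | ∃ j k : Fin (g-1), ((j : ℕ) + 1 < k ∨ (k : ℕ) + 1 < j) ∧
        r = of (some k) * of (some j) * (of (some j) * of (some k))⁻¹} ∪
  -- (E2)
  {r | ∃ j k : Fin (g-1), (j : ℕ) + 1 = k ∧
        r = of (some j) * of (some k) * of (some j) *
            (of (some k) * of (some j) * of (some k))⁻¹} ∪
  -- (E3)
  {(List.ofFn (fun i : Fin (g-1) => of (some i : Option (Fin (g-1))))).prod ^ g *
      (if Odd g then (of (none : Option (Fin (g-1))))⁻¹ else 1)} ∪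
  -- (E4)
  {of (none : Option (Fin (g-1))) ^ 2} ∪
  -- (E5)  ρ t_j ρ = t_j
  {r | ∃ j : Fin (g-1), r = of none * of (some j) * of none * (of (some j))⁻¹}

/-- `G_E(g)`, a presentation of the group `M^{h+}(N_g)`. -/
def GE (g : ℕ) : Type := PresentedGroup (relsE g)

instance (g : ℕ) : Group (GE g) := by unfold GE; infer_instance

/-- The generator `t_{i+1}` of `G_E(g)`. -/
def GE.t {g : ℕ} (i : Fin (g-1)) : GE g := PresentedGroup.of (rels := relsE g) (some i)

/-- The generator `ρ` of `G_E(g)`. -/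
def GE.ρ (g : ℕ) : GE g := PresentedGroup.of (rels := relsE g) none

/-!
Relations (E4) and (E5) make `ρ` a central element with `ρ² = 1`, and for odd `g` relation (E3)
says `(t_1 ⋯ t_{g-1})^g = ρ`. So everything reduces to `ρ ≠ 1`, which is detected by a
homomorphism to a cyclic group sending every `t_i` to the same element `τ`, so that (E1) and (E2)
hold trivially: for even `g` take `τ = 0`, `ρ ↦ 1` in `ZMod 2`; for odd `g` take `τ = 1`,
`ρ ↦ g(g-1)` in `ZMod (2g(g-1))`.
-/

namespace GE

open PresentedGroup

variable {g : ℕ}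

lemma rho_sq : ρ g ^ 2 = 1 := by
  have h := one_of_mem (rels := relsE g) (x := FreeGroup.of none ^ 2) (Or.inl (Or.inr rfl))
  rwa [map_pow] at h

lemma commute_t_rho (j : Fin (g - 1)) : Commute (t j) (ρ g) := by
  have h : ρ g * t j * ρ g = t j := mk_eq_mk_of_mul_inv_mem (rels := relsE g)
    (x := FreeGroup.of none * FreeGroup.of (some j) * FreeGroup.of none)
    (y := FreeGroup.of (some j)) (Or.inr ⟨j, rfl⟩)
  calc t j * ρ g = ρ g * t j * ρ g * ρ g := by rw [h]
    _ = ρ g * t j := by rw [mul_assoc, ← sq, rho_sq, mul_one]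

lemma rho_mem_center : ρ g ∈ Subgroup.center (GE g) := by
  refine Subgroup.mem_center_iff.mpr fun x ↦
    Subgroup.mem_centralizer_singleton_iff.mp (generated_by (relsE g) _ (fun o ↦ ?_) x)
  cases o with
  | none => exact Subgroup.mem_centralizer_singleton_iff.mpr rfl
  | some j => exact Subgroup.mem_centralizer_singleton_iff.mpr (commute_t_rho j)

lemma prod_t_pow_of_odd (hodd : Odd g) :
    (List.ofFn (fun i : Fin (g - 1) => t i)).prod ^ g = ρ g := by
  have h := mk_eq_mk_of_mul_inv_mem (rels := relsE g)
    (x := (List.ofFn (fun i : Fin (g - 1) => FreeGroup.of (some i))).prod ^ g)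
    (y := FreeGroup.of none) (by simp [relsE, hodd])
  simp only [_root_.map_pow, map_list_prod, List.map_ofFn] at h
  exact h

def liftConst {H : Type*} [Group H] (τ r : H) (hr : r ^ 2 = 1) (hτr : Commute τ r)
    (hE3 : (τ ^ (g - 1)) ^ g = if Odd g then r else 1) : GE g →* H :=
  toGroup (f := fun o ↦ o.elim r fun _ => τ) <| by
    rintro _ ((((⟨j, k, -, rfl⟩ | ⟨j, k, -, rfl⟩) | rfl) | rfl) | ⟨j, rfl⟩)
    · simp
    · simp
    · simp only [map_mul, map_pow, map_list_prod, List.map_ofFn, Function.comp_def,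
        FreeGroup.lift_apply_of, Option.elim, List.ofFn_const, List.prod_replicate, hE3]
      split_ifs <;> simp
    · simpa using hr
    · simp only [map_mul, map_inv, FreeGroup.lift_apply_of, Option.elim]
      rw [mul_assoc r, hτr.eq, ← mul_assoc, ← sq, hr, one_mul, mul_inv_cancel]

lemma liftConst_rho {H : Type*} [Group H] (τ r : H) (hr : r ^ 2 = 1) (hτr : Commute τ r)
    (hE3 : (τ ^ (g - 1)) ^ g = if Odd g then r else 1) :
    liftConst τ r hr hτr hE3 (ρ g) = r :=
  toGroup.of _

lemma rho_ne_one_of_liftConst {H : Type*} [Group H] (τ r : H) (hr : r ^ 2 = 1)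
    (hτr : Commute τ r) (hE3 : (τ ^ (g - 1)) ^ g = if Odd g then r else 1) (hr₁ : r ≠ 1) :
    ρ g ≠ 1 := fun h ↦ hr₁ <| by rw [← liftConst_rho τ r hr hτr hE3, h, map_one]

lemma rho_ne_one (hg : 2 ≤ g) : ρ g ≠ 1 := by
  rcases Nat.even_or_odd g with heven | hodd
  · refine rho_ne_one_of_liftConst (1 : Multiplicative (ZMod 2)) (.ofAdd 1) (by decide)
      (Commute.one_left _) ?_ (by decide)
    simp [Nat.not_odd_iff_even.mpr heven]
  · set m := (g - 1) * g
    have hm : 0 < m := Nat.mul_pos (by omega) (by omega)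
    refine rho_ne_one_of_liftConst (.ofAdd 1 : Multiplicative (ZMod (2 * m)))
      (.ofAdd (m : ZMod (2 * m))) ?_ (Commute.all _ _) ?_ ?_
    · rw [← ofAdd_nsmul, nsmul_eq_mul, ← Nat.cast_ofNat, ← Nat.cast_mul, ZMod.natCast_self,
        ofAdd_zero]
    · rw [if_pos hodd, ← pow_mul, ← ofAdd_nsmul, nsmul_one]
    · rw [Ne, ofAdd_eq_one, ZMod.natCast_eq_zero_iff]
      exact fun h ↦ absurd (Nat.le_of_dvd hm h) (by omega)

end GE

/-- `ρ ≠ 1` in `G_E(g)`, so `ρ` has order exactly `2`; in particular for `g` odd,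
`(t_1 ⋯ t_{g-1})^g` is a nontrivial central element of order `2` in `G_E(g)`. -/
theorem stmt16 (g : ℕ) (hg : 3 ≤ g) :
    GE.ρ g ≠ 1 ∧ orderOf (GE.ρ g) = 2 ∧
    (Odd g →
      (List.ofFn (fun i : Fin (g-1) => GE.t i)).prod ^ g ∈ Subgroup.center (GE g) ∧
      (List.ofFn (fun i : Fin (g-1) => GE.t i)).prod ^ g ≠ 1 ∧
      orderOf ((List.ofFn (fun i : Fin (g-1) => GE.t i)).prod ^ g) = 2) := by
  have hρ : GE.ρ g ≠ 1 := GE.rho_ne_one (by omega)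
  have hord : orderOf (GE.ρ g) = 2 := orderOf_eq_prime GE.rho_sq hρ
  refine ⟨hρ, hord, fun hodd ↦ ?_⟩
  rw [GE.prod_t_pow_of_odd hodd]
  exact ⟨GE.rho_mem_center, hρ, hord⟩
end

section
/- For g ≥ 3 there exists an involutive automorphism φ of G_E(g) with φ(t_j) = t_j^{−1} for j = 1,…,g−1 and φ(ρ) = ρ, and the semidirect product G_E(g) ⋊ Z/2, where the nontrivial element of Z/2 acts by φ, is isomorphic to G_C(g) via the map sending t_j to t_j, ρ to ρ, and the generator of Z/2 to s. In particular, the natural homomorphism G_E(g) → G_C(g) (t_j ↦ t_j, ρ ↦ ρ) is injective and its image is a subgroup of index 2 in G_C(g). -/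
open FreeGroup in
/-- Relations (C1)-(C8). The generator `Sum.inl i` is `t_{i+1}`, `Sum.inr false` is `s`,
and `Sum.inr true` is `ρ`. -/
def relsC (g : ℕ) : Set (FreeGroup (Fin (g-1) ⊕ Bool)) :=
  -- (C1)
  {r | ∃ j k : Fin (g-1), ((j : ℕ) + 1 < k ∨ (k : ℕ) + 1 < j) ∧
        r = of (.inl k) * of (.inl j) * (of (.inl j) * of (.inl k))⁻¹} ∪
  -- (C2)
  {r | ∃ j k : Fin (g-1), (j : ℕ) + 1 = k ∧
        r = of (.inl j) * of (.inl k) * of (.inl j) *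
            (of (.inl k) * of (.inl j) * of (.inl k))⁻¹} ∪
  -- (C3)
  {(List.ofFn (fun i : Fin (g-1) => of (Sum.inl i : Fin (g-1) ⊕ Bool))).prod ^ g *
      (if Odd g then (of (Sum.inr true : Fin (g-1) ⊕ Bool))⁻¹ else 1)} ∪
  -- (C4)
  {of (Sum.inr false : Fin (g-1) ⊕ Bool) ^ 2} ∪
  -- (C5)  s t_j s = t_j⁻¹
  {r | ∃ j : Fin (g-1),
        r = of (.inr false) * of (.inl j) * of (.inr false) * of (.inl j)} ∪
  -- (C6)
  {of (Sum.inr true : Fin (g-1) ⊕ Bool) ^ 2} ∪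
  -- (C7)  ρ t_j ρ = t_j
  {r | ∃ j : Fin (g-1),
        r = of (.inr true) * of (.inl j) * of (.inr true) * (of (.inl j))⁻¹} ∪
  -- (C8)  ρ s ρ = s
  {of (Sum.inr true : Fin (g-1) ⊕ Bool) * of (.inr false) * of (.inr true) *
      (of (.inr false))⁻¹}

/-- `G_C(g)`, a presentation of the hyperelliptic mapping class group `M^h(N_g)`. -/
def GC (g : ℕ) : Type := PresentedGroup (relsC g)

instance (g : ℕ) : Group (GC g) := by unfold GC; infer_instance

/-- The generator `t_{i+1}` of `G_C(g)`. -/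
def GC.t {g : ℕ} (i : Fin (g-1)) : GC g := PresentedGroup.of (rels := relsC g) (Sum.inl i)

/-- The generator `s` of `G_C(g)`. -/
def GC.s (g : ℕ) : GC g := PresentedGroup.of (rels := relsC g) (Sum.inr false)

/-- The generator `ρ` of `G_C(g)`. -/
def GC.ρ (g : ℕ) : GC g := PresentedGroup.of (rels := relsC g) (Sum.inr true)

/-!
The only defining relation of `G_E(g)` that is not obviously preserved by `t_j ↦ t_j⁻¹`,
`ρ ↦ ρ` is (E3), which turns into `(t_{g-1} ⋯ t_1) ^ g = (t_1 ⋯ t_{g-1}) ^ g`. This holds for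
any elements satisfying the braid relations: `x = t_1 ⋯ t_{g-1}` conjugates `t_i` to `t_{i+1}`
and `x²` conjugates `t_{g-1}` to `t_1`, so `x ^ g` is central; and a word in the `t_j`
conjugates `x` to `t_{g-1} ⋯ t_1` using only the far commutations.

Given the involution `φ`, relations (C4), (C5), (C8) say precisely that `s` acts on the
`t_j, ρ` by `φ`, so the presentations yield mutually inverse homomorphisms between
`G_E(g) ⋊ ℤ/2` and `G_C(g)`; under this isomorphism `G_E(g)` becomes the kernel of the
projection onto `ℤ/2`.
-/

lemma commute_of_mul_mul_eq {G : Type*} [Group G] {a b : G} (ha : a ^ 2 = 1)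
    (h : a * b * a = b) : Commute a b :=
  calc a * b = a * b * a ^ 2 := by rw [ha, mul_one]
    _ = b * a := by rw [sq, ← mul_assoc, h]

lemma SemidirectProduct.index_range_inl {N G : Type*} [Group N] [Group G]
    (φ : G →* MulAut N) : (SemidirectProduct.inl : N →* N ⋊[φ] G).range.index = Nat.card G := by
  rw [SemidirectProduct.range_inl_eq_ker_rightHom, Subgroup.index_ker,
    MonoidHom.range_eq_top_of_surjective _ SemidirectProduct.rightHom_surjective,
    Subgroup.card_top]

section ZModTwo

variable {M : Type*} [Group M]

def zmodTwoHom (u : M) (hu : u ^ 2 = 1) : Multiplicative (ZMod 2) →* M :=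
  AddMonoidHom.toMultiplicativeLeft
    (ZMod.lift 2 ⟨zmultiplesHom (Additive M) (Additive.ofMul u), by simp [← ofMul_zpow, hu]⟩)

@[simp] lemma zmodTwoHom_ofAdd_one (u : M) (hu : u ^ 2 = 1) :
    zmodTwoHom u hu (Multiplicative.ofAdd 1) = u := by
  simp only [zmodTwoHom, AddMonoidHom.toMultiplicativeLeft_apply_apply, toAdd_ofAdd]
  rw [← Int.cast_one, ZMod.lift_coe]
  simp

lemma zmodTwo_eq_one_or_eq_ofAdd_one (z : Multiplicative (ZMod 2)) :
    z = 1 ∨ z = Multiplicative.ofAdd 1 := by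
  revert z; decide

lemma zmodTwo_hom_ext {f f' : Multiplicative (ZMod 2) →* M}
    (h : f (Multiplicative.ofAdd 1) = f' (Multiplicative.ofAdd 1)) : f = f' := by
  ext z
  rcases zmodTwo_eq_one_or_eq_ofAdd_one z with rfl | rfl
  exacts [(map_one f).trans (map_one f').symm, h]

end ZModTwo

section Braid

variable {G : Type*} [Group G]

def ascProd (a : ℕ → G) (k : ℕ) : G := ((List.range k).map a).prod

def descProd (a : ℕ → G) (k : ℕ) : G := ((List.range k).map a).reverse.prod

lemma ascProd_succ (a : ℕ → G) (k : ℕ) : ascProd a (k + 1) = ascProd a k * a k :=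
  List.prod_range_succ a k

lemma ascProd_succ' (a : ℕ → G) (k : ℕ) :
    ascProd a (k + 1) = a 0 * ascProd (fun i => a (i + 1)) k :=
  List.prod_range_succ' a k

lemma descProd_succ (a : ℕ → G) (k : ℕ) : descProd a (k + 1) = a k * descProd a k := by
  simp [descProd, List.range_succ]

def FarCommute (a : ℕ → G) (n : ℕ) : Prop :=
  ∀ i j, i + 1 < j → j < n → Commute (a i) (a j)

structure BraidRelations (a : ℕ → G) (n : ℕ) : Prop where
  farCommute : FarCommute a n
  braid : ∀ i, i + 1 < n → a i * a (i + 1) * a i = a (i + 1) * a i * a (i + 1)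

namespace FarCommute

variable {a : ℕ → G} {n : ℕ}

lemma commute_list_prod (h : FarCommute a n) {l : List ℕ} {j : ℕ}
    (hl : ∀ i ∈ l, i + 1 < j) (hj : j < n) : Commute (l.map a).prod (a j) :=
  Commute.list_prod_left _ _ fun _ hx => by
    obtain ⟨i, hi, rfl⟩ := List.mem_map.1 hx
    exact h i j (hl i hi) hj

lemma commute_ascProd (h : FarCommute a n) {k j : ℕ} (hkj : k < j) (hj : j < n) :
    Commute (ascProd a k) (a j) :=
  h.commute_list_prod (fun i hi => by have := List.mem_range.1 hi; omega) hj

lemma commute_descProd (h : FarCommute a n) {k j : ℕ} (hkj : k < j) (hj : j < n) :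
    Commute (descProd a k) (a j) := by
  rw [descProd, ← List.map_reverse]
  exact h.commute_list_prod (fun i hi => by
    have := List.mem_range.1 (List.mem_reverse.1 hi); omega) hj

lemma exists_semiconjBy_ascProd_descProd (h : FarCommute a n) :
    ∃ w ∈ Subgroup.closure (a '' Set.Iio n), SemiconjBy w (ascProd a n) (descProd a n) := by
  have hmem : ∀ k ≤ n, descProd a k ∈ Subgroup.closure (a '' Set.Iio n) := fun k hk =>
    Subgroup.list_prod_mem _ fun x hx => by
      obtain ⟨i, hi, rfl⟩ := List.mem_map.1 (List.mem_reverse.1 hx)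
      exact Subgroup.subset_closure ⟨i, (List.mem_range.1 hi).trans_le hk, rfl⟩
  suffices ∀ k ≤ n, ∃ w ∈ Subgroup.closure (a '' Set.Iio n),
      SemiconjBy w (ascProd a k) (descProd a k) ∧ ∀ j, k ≤ j → j < n → Commute w (a j) from
    (this n le_rfl).imp fun _ ⟨hw, hsc, _⟩ => ⟨hw, hsc⟩
  intro k hk
  induction k with
  | zero => exact ⟨1, one_mem _, SemiconjBy.one_left _, fun j _ _ => Commute.one_left _⟩
  | succ k ih =>
    obtain ⟨w, hw, hsc, hcomm⟩ := ih (by omega)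
    have hrot : SemiconjBy (descProd a k)⁻¹ (descProd a k * a k) (a k * descProd a k) := by
      simp [SemiconjBy, mul_assoc]
    refine ⟨(descProd a k)⁻¹ * w, mul_mem (inv_mem (hmem k (by omega))) hw, ?_, ?_⟩
    · rw [ascProd_succ, descProd_succ]
      exact hrot.mul_left (hsc.mul_right (hcomm k le_rfl (by omega)))
    · intro j hj hjn
      exact (h.commute_descProd (by omega) hjn).inv_left.mul_left (hcomm j (by omega) hjn)

end FarCommute

namespace BraidRelations

variable {a : ℕ → G} {n : ℕ}

lemma semiconjBy_ascProd (h : BraidRelations a n) {i k : ℕ} (hik : i + 2 ≤ k) (hk : k ≤ n) :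
    SemiconjBy (ascProd a k) (a i) (a (i + 1)) := by
  induction k, hik using Nat.le_induction with
  | base =>
    have hc := h.farCommute.commute_ascProd (k := i) (j := i + 1) (by omega) (by omega)
    show ascProd a (i + 2) * a i = a (i + 1) * ascProd a (i + 2)
    calc ascProd a (i + 2) * a i = ascProd a i * (a i * a (i + 1) * a i) := by
          simp only [ascProd_succ, mul_assoc]
      _ = ascProd a i * a (i + 1) * (a i * a (i + 1)) := by
          rw [h.braid i (by omega)]; simp only [mul_assoc]
      _ = a (i + 1) * ascProd a (i + 2) := by
          rw [hc.eq]; simp only [ascProd_succ, mul_assoc]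
  | succ k hik ih =>
    rw [ascProd_succ]
    exact (ih (by omega)).mul_left (h.farCommute i k (by omega) (by omega)).symm

lemma semiconjBy_ascProd_ascProd (h : BraidRelations a n) {k : ℕ} (hk : k + 1 ≤ n) :
    SemiconjBy (ascProd a n) (ascProd a k) (ascProd (fun i => a (i + 1)) k) := by
  induction k with
  | zero => exact SemiconjBy.one_right _
  | succ k ih =>
    rw [ascProd_succ, ascProd_succ]
    exact (ih (by omega)).mul_right (h.semiconjBy_ascProd (by omega) le_rfl)

lemma semiconjBy_sq_ascProd {m : ℕ} (h : BraidRelations a (m + 1)) :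
    SemiconjBy (ascProd a (m + 1) ^ 2) (a m) (a 0) := by
  set x := ascProd a (m + 1)
  have hx_last : x = ascProd a m * a m := ascProd_succ a m
  have hx_first : x = a 0 * ascProd (fun i => a (i + 1)) m := ascProd_succ' a m
  have hshift : x * ascProd a m = ascProd (fun i => a (i + 1)) m * x :=
    h.semiconjBy_ascProd_ascProd le_rfl
  show x ^ 2 * a m = a 0 * x ^ 2
  calc x ^ 2 * a m = a 0 * ascProd (fun i => a (i + 1)) m * x * a m := by rw [sq, ← hx_first]
    _ = a 0 * (x * ascProd a m * a m) := by rw [hshift]; simp only [mul_assoc]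
    _ = a 0 * x ^ 2 := by rw [mul_assoc x, ← hx_last, sq]

lemma semiconjBy_pow_ascProd (h : BraidRelations a n) {i j : ℕ} (hij : i + j < n) :
    SemiconjBy (ascProd a n ^ j) (a i) (a (i + j)) := by
  induction j with
  | zero => rw [pow_zero]; exact SemiconjBy.one_left _
  | succ j ih =>
    rw [pow_succ']
    exact (h.semiconjBy_ascProd (i := i + j) (by omega) le_rfl).mul_left (ih (by omega))

/-- Conjugation by `ascProd a n ^ (n + 1)` moves `a i` up to `a (n - 1)`, wraps around to `a 0`
and climbs back to `a i`. -/
lemma commute_pow_ascProd (h : BraidRelations a n) {i : ℕ} (hi : i < n) :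
    Commute (ascProd a n ^ (n + 1)) (a i) := by
  obtain ⟨r, rfl⟩ : ∃ r, n = i + r + 1 := ⟨n - i - 1, by omega⟩
  have hsc := ((h.semiconjBy_pow_ascProd (i := 0) (j := i) (by omega)).mul_left
    h.semiconjBy_sq_ascProd).mul_left (h.semiconjBy_pow_ascProd (i := i) (j := r) (by omega))
  rw [zero_add, ← pow_add, ← pow_add] at hsc
  rwa [show i + r + 1 + 1 = i + 2 + r by omega]

theorem pow_ascProd_eq_pow_descProd (h : BraidRelations a n) :
    ascProd a n ^ (n + 1) = descProd a n ^ (n + 1) := by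
  obtain ⟨w, hw, hsc⟩ := h.farCommute.exists_semiconjBy_ascProd_descProd
  have hcentral : Subgroup.closure (a '' Set.Iio n) ≤
      Subgroup.centralizer {ascProd a n ^ (n + 1)} := by
    rw [Subgroup.closure_le]
    rintro _ ⟨i, hi, rfl⟩
    exact Subgroup.mem_centralizer_singleton_iff.2 (h.commute_pow_ascProd hi).eq.symm
  have hw' : w * ascProd a n ^ (n + 1) = ascProd a n ^ (n + 1) * w :=
    Subgroup.mem_centralizer_singleton_iff.1 (hcentral hw)
  exact mul_right_cancel (hw'.symm.trans (hsc.pow_right (n + 1)))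

end BraidRelations

theorem pow_prod_reverse_ofFn {n : ℕ} (t : Fin n → G)
    (hcomm : ∀ j k : Fin n, (j : ℕ) + 1 < k → Commute (t j) (t k))
    (hbraid : ∀ j k : Fin n, (j : ℕ) + 1 = k → t j * t k * t j = t k * t j * t k) :
    (List.ofFn t).reverse.prod ^ (n + 1) = (List.ofFn t).prod ^ (n + 1) := by
  set a : ℕ → G := fun i => if h : i < n then t ⟨i, h⟩ else 1 with ha
  have hofFn : List.ofFn t = (List.range n).map a :=
    List.ext_getElem (by simp) fun i _ hi => by
      simp only [List.length_map, List.length_range] at hi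
      simp [ha, hi]
  have hrel : BraidRelations a n :=
    { farCommute := fun i j hij hj => by
        simpa [ha, hj, show i < n by omega] using hcomm ⟨i, by omega⟩ ⟨j, hj⟩ hij
      braid := fun i hi => by
        simpa [ha, hi, show i < n by omega] using hbraid ⟨i, by omega⟩ ⟨i + 1, hi⟩ rfl }
  rw [hofFn]
  exact hrel.pow_ascProd_eq_pow_descProd.symm

end Braid

/-- Relations (E1)–(E5) for elements `t j`, `ρ` of an arbitrary group, with (E5) in the
equivalent (given (E4)) form `Commute ρ (t j)`. -/
structure SatisfiesRelsE {H : Type*} [Group H] (g : ℕ) (t : Fin (g-1) → H) (ρ : H) : Prop where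
  commute : ∀ j k : Fin (g-1), (j : ℕ) + 1 < k → Commute (t j) (t k)
  braid : ∀ j k : Fin (g-1), (j : ℕ) + 1 = k → t j * t k * t j = t k * t j * t k
  pow_prod : (List.ofFn t).prod ^ g = if Odd g then ρ else 1
  ρ_sq : ρ ^ 2 = 1
  commute_ρ : ∀ j, Commute ρ (t j)

/-- Relations (C1)–(C8), with (C7) and (C8) in the form `Commute ρ _`. -/
structure SatisfiesRelsC {H : Type*} [Group H] (g : ℕ) (t : Fin (g-1) → H) (s ρ : H) : Prop
    extends SatisfiesRelsE g t ρ where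
  s_sq : s ^ 2 = 1
  s_mul_mul_s : ∀ j, s * t j * s = (t j)⁻¹
  commute_ρ_s : Commute ρ s

namespace SatisfiesRelsE

variable {H K : Type*} [Group H] [Group K] {g : ℕ} {t : Fin (g-1) → H} {ρ : H}

lemma map (h : SatisfiesRelsE g t ρ) (f : H →* K) : SatisfiesRelsE g (f ∘ t) (f ρ) where
  commute j k hjk := (h.commute j k hjk).map f
  braid j k hjk := by simpa only [Function.comp_apply, map_mul] using congrArg f (h.braid j k hjk)
  pow_prod := by
    rw [← List.map_ofFn, ← map_list_prod, ← map_pow, h.pow_prod, apply_ite f, map_one]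
  ρ_sq := by rw [← map_pow, h.ρ_sq, map_one]
  commute_ρ j := (h.commute_ρ j).map f

lemma inv_ρ (h : SatisfiesRelsE g t ρ) : ρ⁻¹ = ρ :=
  inv_eq_of_mul_eq_one_right (by rw [← sq, h.ρ_sq])

lemma inv (h : SatisfiesRelsE g t ρ) : SatisfiesRelsE g (fun j => (t j)⁻¹) ρ where
  commute j k hjk := (h.commute j k hjk).inv_inv
  braid j k hjk := by
    simpa only [mul_inv_rev, mul_assoc] using congrArg (·⁻¹) (h.braid j k hjk)
  pow_prod := by
    have hrev : (List.ofFn t).reverse.prod ^ g = (List.ofFn t).prod ^ g := by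
      rcases g with _ | g
      · rfl
      · exact pow_prod_reverse_ofFn t h.commute h.braid
    show (List.ofFn ((·⁻¹) ∘ t)).prod ^ g = _
    rw [← List.map_ofFn, ← inv_inj, ← inv_pow, ← List.prod_reverse_noncomm, hrev,
      h.pow_prod]
    split_ifs
    · exact h.inv_ρ.symm
    · exact inv_one.symm
  ρ_sq := h.ρ_sq
  commute_ρ j := (h.commute_ρ j).inv_right

end SatisfiesRelsE

namespace GE

variable {g : ℕ}

lemma mk_of_some (j : Fin (g-1)) :
    PresentedGroup.mk (relsE g) (FreeGroup.of (some j)) = GE.t j := rfl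

lemma mk_of_none : PresentedGroup.mk (relsE g) (FreeGroup.of none) = GE.ρ g := rfl

lemma ρ_sq : GE.ρ g ^ 2 = 1 := PresentedGroup.one_of_mem (rels := relsE g) (Or.inl (Or.inr rfl))

lemma satisfiesRelsE : SatisfiesRelsE g GE.t (GE.ρ g) where
  commute j k hjk := by
    have := PresentedGroup.one_of_mem (rels := relsE g) (Or.inl (Or.inl (Or.inl (Or.inl
      ⟨k, j, Or.inr hjk, rfl⟩))))
    simp only [map_mul, map_inv, mk_of_some] at this
    exact mul_inv_eq_one.1 this
  braid j k hjk := by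
    have := PresentedGroup.one_of_mem (rels := relsE g) (Or.inl (Or.inl (Or.inl (Or.inr
      ⟨j, k, hjk, rfl⟩))))
    simp only [map_mul, map_inv, mk_of_some] at this
    exact mul_inv_eq_one.1 this
  pow_prod := by
    have := PresentedGroup.one_of_mem (rels := relsE g) (Or.inl (Or.inl (Or.inr rfl)))
    simp only [map_mul, map_pow, map_list_prod, List.map_ofFn, apply_ite (PresentedGroup.mk _),
      map_inv, map_one, Function.comp_def, mk_of_some, mk_of_none] at this
    split_ifs at this ⊢
    · exact mul_inv_eq_one.1 this
    · exact (mul_one _).symm.trans this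
  ρ_sq := ρ_sq
  commute_ρ j := by
    have := PresentedGroup.one_of_mem (rels := relsE g) (Or.inr ⟨j, rfl⟩)
    simp only [map_mul, map_inv, mk_of_some, mk_of_none] at this
    exact commute_of_mul_mul_eq ρ_sq (mul_inv_eq_one.1 this)

variable {H : Type*} [Group H] {t : Fin (g-1) → H} {ρ : H}

def lift (h : SatisfiesRelsE g t ρ) : GE g →* H :=
  PresentedGroup.toGroup (f := fun x => x.elim ρ t) <| by
    rintro r ((((⟨j, k, hjk, rfl⟩ | ⟨j, k, hjk, rfl⟩) | rfl) | rfl) | ⟨j, rfl⟩) <;>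
      simp only [map_mul, map_inv, map_pow, map_list_prod, List.map_ofFn, FreeGroup.lift_apply_of,
        Option.elim_some, Option.elim_none, Function.comp_def, mul_inv_eq_one,
        apply_ite (FreeGroup.lift _), map_one]
    · rcases hjk with hjk | hjk
      exacts [(h.commute j k hjk).eq.symm, (h.commute k j hjk).eq]
    · exact h.braid j k hjk
    · rw [h.pow_prod]
      split_ifs <;> simp
    · exact h.ρ_sq
    · rw [(h.commute_ρ j).eq, mul_assoc, ← sq, h.ρ_sq, mul_one]

@[simp] lemma lift_t (h : SatisfiesRelsE g t ρ) (j : Fin (g-1)) : lift h (GE.t j) = t j :=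
  PresentedGroup.toGroup.of _

@[simp] lemma lift_ρ (h : SatisfiesRelsE g t ρ) : lift h (GE.ρ g) = ρ :=
  PresentedGroup.toGroup.of _

end GE

namespace GC

variable {g : ℕ}

lemma mk_of_inl (j : Fin (g-1)) :
    PresentedGroup.mk (relsC g) (FreeGroup.of (Sum.inl j)) = GC.t j := rfl

lemma mk_of_inr_false : PresentedGroup.mk (relsC g) (FreeGroup.of (Sum.inr false)) = GC.s g :=
  rfl

lemma mk_of_inr_true : PresentedGroup.mk (relsC g) (FreeGroup.of (Sum.inr true)) = GC.ρ g :=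
  rfl

lemma s_sq : GC.s g ^ 2 = 1 :=
  PresentedGroup.one_of_mem (rels := relsC g) (Or.inl (Or.inl (Or.inl (Or.inl (Or.inr rfl)))))

lemma ρ_sq : GC.ρ g ^ 2 = 1 :=
  PresentedGroup.one_of_mem (rels := relsC g) (Or.inl (Or.inl (Or.inr rfl)))

lemma satisfiesRelsC : SatisfiesRelsC g GC.t (GC.s g) (GC.ρ g) where
  commute j k hjk := by
    have := PresentedGroup.one_of_mem (rels := relsC g) (Or.inl (Or.inl (Or.inl (Or.inl (Or.inl
      (Or.inl (Or.inl ⟨k, j, Or.inr hjk, rfl⟩)))))))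
    simp only [map_mul, map_inv, mk_of_inl] at this
    exact mul_inv_eq_one.1 this
  braid j k hjk := by
    have := PresentedGroup.one_of_mem (rels := relsC g) (Or.inl (Or.inl (Or.inl (Or.inl (Or.inl
      (Or.inl (Or.inr ⟨j, k, hjk, rfl⟩)))))))
    simp only [map_mul, map_inv, mk_of_inl] at this
    exact mul_inv_eq_one.1 this
  pow_prod := by
    have := PresentedGroup.one_of_mem (rels := relsC g)
      (Or.inl (Or.inl (Or.inl (Or.inl (Or.inl (Or.inr rfl))))))
    simp only [map_mul, map_pow, map_list_prod, List.map_ofFn, apply_ite (PresentedGroup.mk _),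
      map_inv, map_one, Function.comp_def, mk_of_inl, mk_of_inr_true] at this
    split_ifs at this ⊢
    · exact mul_inv_eq_one.1 this
    · exact (mul_one _).symm.trans this
  ρ_sq := ρ_sq
  commute_ρ j := by
    have := PresentedGroup.one_of_mem (rels := relsC g) (Or.inl (Or.inr ⟨j, rfl⟩))
    simp only [map_mul, map_inv, mk_of_inl, mk_of_inr_true] at this
    exact commute_of_mul_mul_eq ρ_sq (mul_inv_eq_one.1 this)
  s_sq := s_sq
  s_mul_mul_s j := by
    have := PresentedGroup.one_of_mem (rels := relsC g)
      (Or.inl (Or.inl (Or.inl (Or.inr ⟨j, rfl⟩))))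
    simp only [map_mul, mk_of_inl, mk_of_inr_false] at this
    exact mul_eq_one_iff_eq_inv.1 this
  commute_ρ_s := by
    have := PresentedGroup.one_of_mem (rels := relsC g) (Or.inr rfl)
    simp only [map_mul, map_inv, mk_of_inr_false, mk_of_inr_true] at this
    exact commute_of_mul_mul_eq ρ_sq (mul_inv_eq_one.1 this)

variable {H : Type*} [Group H] {t : Fin (g-1) → H} {s ρ : H}

def lift (h : SatisfiesRelsC g t s ρ) : GC g →* H :=
  PresentedGroup.toGroup (f := Sum.elim t fun b => cond b ρ s) <| by
    rintro r (((((((⟨j, k, hjk, rfl⟩ | ⟨j, k, hjk, rfl⟩) | rfl) | rfl) | ⟨j, rfl⟩) | rfl) |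
      ⟨j, rfl⟩) | rfl) <;>
      simp only [map_mul, map_inv, map_pow, map_list_prod, List.map_ofFn, FreeGroup.lift_apply_of,
        Sum.elim_inl, Sum.elim_inr, cond_true, cond_false, Function.comp_def, mul_inv_eq_one,
        apply_ite (FreeGroup.lift _), map_one]
    · rcases hjk with hjk | hjk
      exacts [(h.commute j k hjk).eq.symm, (h.commute k j hjk).eq]
    · exact h.braid j k hjk
    · rw [h.pow_prod]
      split_ifs <;> simp
    · exact h.s_sq
    · rw [h.s_mul_mul_s, inv_mul_cancel]
    · exact h.ρ_sq
    · rw [(h.commute_ρ j).eq, mul_assoc, ← sq, h.ρ_sq, mul_one]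
    · rw [h.commute_ρ_s.eq, mul_assoc, ← sq, h.ρ_sq, mul_one]

@[simp] lemma lift_t (h : SatisfiesRelsC g t s ρ) (j : Fin (g-1)) : lift h (GC.t j) = t j :=
  PresentedGroup.toGroup.of _

@[simp] lemma lift_s (h : SatisfiesRelsC g t s ρ) : lift h (GC.s g) = s :=
  PresentedGroup.toGroup.of _

@[simp] lemma lift_ρ (h : SatisfiesRelsC g t s ρ) : lift h (GC.ρ g) = ρ :=
  PresentedGroup.toGroup.of _

end GC

namespace GE

variable {g : ℕ}

def invHom : GE g →* GE g := lift satisfiesRelsE.inv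

lemma invHom_comp_invHom : (invHom (g := g)).comp invHom = MonoidHom.id (GE g) :=
  PresentedGroup.ext fun
    | some j => show invHom (invHom (GE.t j)) = GE.t j by simp [invHom]
    | none => show invHom (invHom (GE.ρ g)) = GE.ρ g by simp [invHom]

def invAut : MulAut (GE g) := invHom.toMulEquiv invHom invHom_comp_invHom invHom_comp_invHom

@[simp] lemma invAut_t (j : Fin (g-1)) : invAut (GE.t j) = (GE.t j)⁻¹ :=
  show invHom (GE.t j) = _ from lift_t _ j

@[simp] lemma invAut_ρ : invAut (GE.ρ g) = GE.ρ g := show invHom (GE.ρ g) = _ from lift_ρ _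

lemma invAut_invAut (x : GE g) : invAut (invAut x) = x :=
  DFunLike.congr_fun invHom_comp_invHom x

lemma invAut_sq : (invAut : MulAut (GE g)) ^ 2 = 1 :=
  MulEquiv.ext fun x => invAut_invAut x

def toGC : GE g →* GC g := lift GC.satisfiesRelsC.toSatisfiesRelsE

@[simp] lemma toGC_t (j : Fin (g-1)) : toGC (GE.t j) = GC.t j := lift_t _ j

@[simp] lemma toGC_ρ : toGC (GE.ρ g) = GC.ρ g := lift_ρ _

lemma toGC_comp_invAut : toGC.comp (invAut : MulAut (GE g)).toMonoidHom =
    (MulAut.conj (GC.s g)).toMonoidHom.comp toGC := by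
  have hs : (GC.s g)⁻¹ = GC.s g := inv_eq_of_mul_eq_one_right (by rw [← sq, GC.s_sq])
  refine PresentedGroup.ext fun
    | some j => ?_
    | none => ?_
  · show toGC (invAut (GE.t j)) = GC.s g * toGC (GE.t j) * (GC.s g)⁻¹
    rw [invAut_t, map_inv, toGC_t, hs, GC.satisfiesRelsC.s_mul_mul_s]
  · show toGC (invAut (GE.ρ g)) = GC.s g * toGC (GE.ρ g) * (GC.s g)⁻¹
    rw [invAut_ρ, toGC_ρ, ← GC.satisfiesRelsC.commute_ρ_s.eq, mul_inv_cancel_right]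

end GE

section SemidirectProduct

open SemidirectProduct

variable {g : ℕ} {ψ : Multiplicative (ZMod 2) →* MulAut (GE g)}

def semidirectToGC (hψ : ψ (Multiplicative.ofAdd 1) = GE.invAut) :
    GE g ⋊[ψ] Multiplicative (ZMod 2) →* GC g :=
  SemidirectProduct.lift GE.toGC (zmodTwoHom (GC.s g) GC.s_sq) fun z => by
    rcases zmodTwo_eq_one_or_eq_ofAdd_one z with rfl | rfl
    · ext x; simp
    · rw [hψ, zmodTwoHom_ofAdd_one]; exact GE.toGC_comp_invAut

lemma satisfiesRelsC_semidirect (hψ : ψ (Multiplicative.ofAdd 1) = GE.invAut) :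
    SatisfiesRelsC g (fun j => (inl (GE.t j) : GE g ⋊[ψ] Multiplicative (ZMod 2)))
      (inr (Multiplicative.ofAdd 1)) (inl (GE.ρ g)) where
  toSatisfiesRelsE := GE.satisfiesRelsE.map inl
  s_sq := by rw [← map_pow, show (Multiplicative.ofAdd (1 : ZMod 2)) ^ 2 = 1 by decide, map_one]
  s_mul_mul_s j := by
    have := inl_aut (φ := ψ) (Multiplicative.ofAdd 1) (GE.t j)
    rw [hψ, GE.invAut_t, map_inv,
      show (Multiplicative.ofAdd (1 : ZMod 2))⁻¹ = Multiplicative.ofAdd 1 by decide] at this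
    exact this.symm
  commute_ρ_s := by
    have := inl_aut (φ := ψ) (Multiplicative.ofAdd 1) (GE.ρ g)
    rw [hψ, GE.invAut_ρ, map_inv] at this
    exact eq_mul_inv_iff_mul_eq.1 this

def gcToSemidirect (hψ : ψ (Multiplicative.ofAdd 1) = GE.invAut) :
    GC g →* GE g ⋊[ψ] Multiplicative (ZMod 2) :=
  GC.lift (satisfiesRelsC_semidirect hψ)

def semidirectEquivGC (hψ : ψ (Multiplicative.ofAdd 1) = GE.invAut) :
    GE g ⋊[ψ] Multiplicative (ZMod 2) ≃* GC g :=
  (semidirectToGC hψ).toMulEquiv (gcToSemidirect hψ)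
    (SemidirectProduct.hom_ext
      (PresentedGroup.ext fun
        | some j =>
          show gcToSemidirect hψ (semidirectToGC hψ (inl (GE.t j))) = inl (GE.t j) by
            simp [semidirectToGC, gcToSemidirect]
        | none =>
          show gcToSemidirect hψ (semidirectToGC hψ (inl (GE.ρ g))) = inl (GE.ρ g) by
            simp [semidirectToGC, gcToSemidirect])
      (zmodTwo_hom_ext (by simp [semidirectToGC, gcToSemidirect])))
    (PresentedGroup.ext fun
      | .inl j => show semidirectToGC hψ (gcToSemidirect hψ (GC.t j)) = GC.t j by
          simp [semidirectToGC, gcToSemidirect]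
      | .inr false => show semidirectToGC hψ (gcToSemidirect hψ (GC.s g)) = GC.s g by
          simp [semidirectToGC, gcToSemidirect]
      | .inr true => show semidirectToGC hψ (gcToSemidirect hψ (GC.ρ g)) = GC.ρ g by
          simp [semidirectToGC, gcToSemidirect])

@[simp] lemma semidirectEquivGC_inl (hψ : ψ (Multiplicative.ofAdd 1) = GE.invAut) (x : GE g) :
    semidirectEquivGC hψ (inl x) = GE.toGC x :=
  show semidirectToGC hψ (inl x) = _ from SemidirectProduct.lift_inl _ _ _ x

@[simp] lemma semidirectEquivGC_inr (hψ : ψ (Multiplicative.ofAdd 1) = GE.invAut)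
    (z : Multiplicative (ZMod 2)) :
    semidirectEquivGC hψ (inr z) = zmodTwoHom (GC.s g) GC.s_sq z :=
  show semidirectToGC hψ (inr z) = _ from SemidirectProduct.lift_inr _ _ _ z

end SemidirectProduct

theorem stmt17_general (g : ℕ) :
    ∃ φ : MulAut (GE g),
      (∀ j : Fin (g-1), φ (GE.t j) = (GE.t j)⁻¹) ∧
      φ (GE.ρ g) = GE.ρ g ∧
      (∀ x, φ (φ x) = x) ∧
      (∀ ψ : Multiplicative (ZMod 2) →* MulAut (GE g), ψ (Multiplicative.ofAdd 1) = φ →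
        ∃ e : (GE g) ⋊[ψ] Multiplicative (ZMod 2) ≃* GC g,
          (∀ j : Fin (g-1), e (SemidirectProduct.inl (GE.t j)) = GC.t j) ∧
          e (SemidirectProduct.inl (GE.ρ g)) = GC.ρ g ∧
          e (SemidirectProduct.inr (Multiplicative.ofAdd 1)) = GC.s g) ∧
      ∃ f : GE g →* GC g,
        (∀ j : Fin (g-1), f (GE.t j) = GC.t j) ∧
        f (GE.ρ g) = GC.ρ g ∧
        Function.Injective f ∧
        f.range.index = 2 := by
  refine ⟨GE.invAut, GE.invAut_t, GE.invAut_ρ, GE.invAut_invAut,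
    fun _ hψ => ⟨semidirectEquivGC hψ, by simp, by simp, by simp⟩,
    GE.toGC, GE.toGC_t, GE.toGC_ρ, ?_⟩
  let ψ := zmodTwoHom (GE.invAut : MulAut (GE g)) GE.invAut_sq
  have hψ : ψ (Multiplicative.ofAdd 1) = GE.invAut := zmodTwoHom_ofAdd_one _ _
  let e := semidirectEquivGC hψ
  have hfactor : GE.toGC = (e : GE g ⋊[ψ] Multiplicative (ZMod 2) →* GC g).comp
      SemidirectProduct.inl :=
    MonoidHom.ext fun x => (semidirectEquivGC_inl hψ x).symm
  rw [hfactor, MonoidHom.range_comp, Subgroup.index_map_equiv, SemidirectProduct.index_range_inl,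
    Nat.card_congr Multiplicative.toAdd, Nat.card_zmod]
  exact ⟨e.injective.comp SemidirectProduct.inl_injective, rfl⟩

/-- There is an involutive automorphism `φ` of `G_E(g)` with `φ(t_j) = t_j⁻¹`,
`φ(ρ) = ρ`; the semidirect product `G_E(g) ⋊ ℤ/2` in which the nontrivial element of
`ℤ/2` acts by `φ` is isomorphic to `G_C(g)` via `t_j ↦ t_j`, `ρ ↦ ρ`, generator of
`ℤ/2 ↦ s`; and the natural homomorphism `G_E(g) → G_C(g)` is injective with image of
index `2`. -/
theorem stmt17 (g : ℕ) (hg : 3 ≤ g) :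
    ∃ φ : MulAut (GE g),
      (∀ j : Fin (g-1), φ (GE.t j) = (GE.t j)⁻¹) ∧
      φ (GE.ρ g) = GE.ρ g ∧
      (∀ x, φ (φ x) = x) ∧
      (∀ ψ : Multiplicative (ZMod 2) →* MulAut (GE g), ψ (Multiplicative.ofAdd 1) = φ →
        ∃ e : (GE g) ⋊[ψ] Multiplicative (ZMod 2) ≃* GC g,
          (∀ j : Fin (g-1), e (SemidirectProduct.inl (GE.t j)) = GC.t j) ∧
          e (SemidirectProduct.inl (GE.ρ g)) = GC.ρ g ∧
          e (SemidirectProduct.inr (Multiplicative.ofAdd 1)) = GC.s g) ∧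
      ∃ f : GE g →* GC g,
        (∀ j : Fin (g-1), f (GE.t j) = GC.t j) ∧
        f (GE.ρ g) = GC.ρ g ∧
        Function.Injective f ∧
        f.range.index = 2 :=
  stmt17_general g
end
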